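/- Let X be a strictly increasing grid and let g: ℝ → ℝ be C¹ on ℝ and twice differentiable on ℝ∖{μ} for some point μ, with |g''(x)| ≤ M for all x ≠ μ. Then |D_i g| ≤ M/2 for every i ∈ ℤ. -/

import Mathlib

open MeasureTheory intervalIntegral


/-- A continuous function whose derivative off a point is nonnegative is monotone. -/
lemma mono_aux (f f' : ℝ → ℝ) (μ : ℝ) (hf : Continuous f)
    (hdf : ∀ x ≠ μ, HasDerivAt f (f' x) x) (hpos : ∀ x ≠ μ, 0 ≤ f' x) :
    Monotone f := by
  have h1 : MonotoneOn f (Set.Iic μ) := by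
    apply monotoneOn_of_deriv_nonneg (convex_Iic μ) hf.continuousOn
    · intro x hx
      rw [interior_Iic] at hx
      exact ((hdf x (ne_of_lt hx)).differentiableAt).differentiableWithinAt
    · intro x hx
      rw [interior_Iic] at hx
      rw [(hdf x (ne_of_lt hx)).deriv]
      exact hpos x (ne_of_lt hx)
  have h2 : MonotoneOn f (Set.Ici μ) := by
    apply monotoneOn_of_deriv_nonneg (convex_Ici μ) hf.continuousOn
    · intro x hx
      rw [interior_Ici] at hx
      exact ((hdf x (ne_of_gt hx)).differentiableAt).differentiableWithinAt
    · intro x hx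
      rw [interior_Ici] at hx
      rw [(hdf x (ne_of_gt hx)).deriv]
      exact hpos x (ne_of_gt hx)
  intro x y hxy
  rcases le_total y μ with h | h
  · exact h1 (hxy.trans h) h hxy
  rcases le_total μ x with h' | h'
  · exact h2 h' (h'.trans hxy) hxy
  · exact le_trans (h1 h' Set.self_mem_Iic h') (h2 Set.self_mem_Ici h h)

lemma lip_aux (g' g'' : ℝ → ℝ) (μ M : ℝ) (hc1 : Continuous g')
    (hd2 : ∀ x ≠ μ, HasDerivAt g' (g'' x) x) (hbd : ∀ x ≠ μ, |g'' x| ≤ M) :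
    ∀ x y, x ≤ y → |g' y - g' x| ≤ M * (y - x) := by
  have k1 : Monotone (fun x => M * x + g' x) := by
    apply mono_aux _ (fun x => M + g'' x) μ
      ((continuous_const.mul continuous_id).add hc1)
    · intro x hx
      exact (((hasDerivAt_id x).const_mul M).add (hd2 x hx)).congr_deriv (by simp)
    · intro x hx
      have := abs_le.mp (hbd x hx)
      linarith [this.1]
  have k2 : Monotone (fun x => M * x - g' x) := by
    apply mono_aux _ (fun x => M - g'' x) μ
      ((continuous_const.mul continuous_id).sub hc1)
    · intro x hx
      exact (((hasDerivAt_id x).const_mul M).sub (hd2 x hx)).congr_deriv (by simp)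
    · intro x hx
      have := abs_le.mp (hbd x hx)
      linarith [this.2]
  intro x y hxy
  have := k1 hxy
  have := k2 hxy
  simp only at *
  rw [abs_le]
  constructor <;> linarith

lemma taylor_left (g g' : ℝ → ℝ) (M : ℝ) (hM : 0 ≤ M)
    (hd1 : ∀ x, HasDerivAt g (g' x) x) (hc1 : Continuous g')
    (hlip : ∀ x y, x ≤ y → |g' y - g' x| ≤ M * (y - x)) (a b : ℝ) (hab : a ≤ b) :
    |g b - g a - g' a * (b - a)| ≤ M * (b - a) ^ 2 / 2 := by
  have hint : IntervalIntegrable g' volume a b := hc1.intervalIntegrable a b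
  have hftc : (∫ t in a..b, g' t) = g b - g a :=
    integral_eq_sub_of_hasDerivAt (fun x _ => hd1 x) hint
  have h2 : (∫ t in a..b, (g' t - g' a)) = g b - g a - g' a * (b - a) := by
    rw [intervalIntegral.integral_sub hint (intervalIntegrable_const), hftc,
      intervalIntegral.integral_const, smul_eq_mul]
    ring
  have hbint : IntervalIntegrable (fun t => M * (t - a)) volume a b :=
    (continuous_const.mul (continuous_id.sub continuous_const)).intervalIntegrable a b
  have h3 : ‖∫ t in a..b, (g' t - g' a)‖ ≤ |∫ t in a..b, M * (t - a)| := by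
    apply intervalIntegral.norm_integral_le_abs_of_norm_le _ hbint
    apply ae_restrict_of_forall_mem measurableSet_uIoc
    intro t ht
    rw [Set.uIoc_of_le hab] at ht
    simpa using hlip a t ht.1.le
  have h4 : (∫ t in a..b, M * (t - a)) = M * (b - a) ^ 2 / 2 := by
    rw [intervalIntegral.integral_const_mul]
    rw [show (∫ t in a..b, (t - a)) = (b - a) ^ 2 / 2 by
      rw [intervalIntegral.integral_comp_sub_right (fun x => x) a, integral_id]; ring]
    ring
  rw [h4, abs_of_nonneg (by positivity)] at h3
  rw [h2] at h3
  simpa using h3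

lemma taylor_right (g g' : ℝ → ℝ) (M : ℝ) (hM : 0 ≤ M)
    (hd1 : ∀ x, HasDerivAt g (g' x) x) (hc1 : Continuous g')
    (hlip : ∀ x y, x ≤ y → |g' y - g' x| ≤ M * (y - x)) (a b : ℝ) (hab : a ≤ b) :
    |g b - g a - g' b * (b - a)| ≤ M * (b - a) ^ 2 / 2 := by
  have hint : IntervalIntegrable g' volume a b := hc1.intervalIntegrable a b
  have hftc : (∫ t in a..b, g' t) = g b - g a :=
    integral_eq_sub_of_hasDerivAt (fun x _ => hd1 x) hint
  have h2 : (∫ t in a..b, (g' t - g' b)) = g b - g a - g' b * (b - a) := by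
    rw [intervalIntegral.integral_sub hint (intervalIntegrable_const), hftc,
      intervalIntegral.integral_const, smul_eq_mul]
    ring
  have hbint : IntervalIntegrable (fun t => M * (b - t)) volume a b :=
    (continuous_const.mul (continuous_const.sub continuous_id)).intervalIntegrable a b
  have h3 : ‖∫ t in a..b, (g' t - g' b)‖ ≤ |∫ t in a..b, M * (b - t)| := by
    apply intervalIntegral.norm_integral_le_abs_of_norm_le _ hbint
    apply ae_restrict_of_forall_mem measurableSet_uIoc
    intro t ht
    rw [Set.uIoc_of_le hab] at ht
    have := hlip t b ht.2
    rw [abs_sub_comm] at this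
    simpa using this
  have h4 : (∫ t in a..b, M * (b - t)) = M * (b - a) ^ 2 / 2 := by
    rw [intervalIntegral.integral_const_mul]
    rw [show (∫ t in a..b, (b - t)) = (b - a) ^ 2 / 2 by
      have : (∫ t in a..b, (b - t)) = (∫ t in a..b, (b:ℝ)) - ∫ t in a..b, t :=
        intervalIntegral.integral_sub (intervalIntegrable_const)
          (continuous_id.intervalIntegrable a b)
      rw [this, intervalIntegral.integral_const, integral_id, smul_eq_mul]
      ring]
    ring
  rw [h4, abs_of_nonneg (by positivity)] at h3
  rw [h2] at h3
  simpa using h3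

/-- Second order divided difference on the nodes `X i, X (i+1), X (i+2)`. -/
noncomputable def Dd (X : ℤ → ℝ) (g : ℝ → ℝ) (i : ℤ) : ℝ :=
    g (X i) / ((X (i + 1) - X i) * (X (i + 2) - X i))
  - g (X (i + 1)) / ((X (i + 1) - X i) * (X (i + 2) - X (i + 1)))
  + g (X (i + 2)) / ((X (i + 2) - X (i + 1)) * (X (i + 2) - X i))

/-- If `g` is `C¹` on `ℝ` and twice differentiable off a point `μ` with
`|g''| ≤ M` there, then `|D_i g| ≤ M/2` for every `i`. -/

theorem statement8 (X : ℤ → ℝ) (hX : StrictMono X)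
    (g g' g'' : ℝ → ℝ) (μ M : ℝ)
    (hd1 : ∀ x : ℝ, HasDerivAt g (g' x) x)
    (hc1 : Continuous g')
    (hd2 : ∀ x ≠ μ, HasDerivAt g' (g'' x) x)
    (hbd : ∀ x ≠ μ, |g'' x| ≤ M) :
    ∀ i : ℤ, |Dd X g i| ≤ M / 2 := by
  have hM : 0 ≤ M := le_trans (abs_nonneg _) (hbd (μ + 1) (by linarith))
  have hlip := lip_aux g' g'' μ M hc1 hd2 hbd
  intro i
  have hba : 0 < X (i + 1) - X i := sub_pos.mpr (hX (by omega))
  have hcb : 0 < X (i + 2) - X (i + 1) := sub_pos.mpr (hX (by omega))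
  have e1 := taylor_right g g' M hM hd1 hc1 hlip (X i) (X (i + 1)) (by linarith)
  have e2 := taylor_left g g' M hM hd1 hc1 hlip (X (i + 1)) (X (i + 2)) (by linarith)
  unfold Dd
  set a := X i
  set b := X (i + 1)
  set c := X (i + 2)
  have hca : 0 < c - a := by linarith
  set A := g c - g b - g' b * (c - b) with hA
  set B := g b - g a - g' b * (b - a) with hB
  have hDd : g a / ((b - a) * (c - a)) - g b / ((b - a) * (c - b)) + g c / ((c - b) * (c - a))
      = (A / (c - b) - B / (b - a)) / (c - a) := by
    rw [hA, hB]
    field_simp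
    ring
  rw [hDd, abs_div, abs_of_pos hca, div_le_iff₀ hca]
  have t1 : |A / (c - b)| ≤ M * (c - b) / 2 := by
    rw [abs_div, abs_of_pos hcb, div_le_iff₀ hcb]
    nlinarith
  have t2 : |B / (b - a)| ≤ M * (b - a) / 2 := by
    rw [abs_div, abs_of_pos hba, div_le_iff₀ hba]
    nlinarith
  have := abs_sub (A / (c - b)) (B / (b - a))
  nlinarith
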